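/- Let r ≥ 2 and let n_1 ≤ n_2 ≤ ... ≤ n_r be positive integers with 1 ≤ k ≤ n_1. Then ex(K_{n_1,...,n_r}, kK_2) = (k−1)(n_2 + n_3 + ... + n_r). -/

import Mathlib

open SimpleGraph Finset

/-- `F` has a (not necessarily induced) copy in `G`:  there is an injective map of the
vertices of `F` into the vertices of `G` preserving adjacency. -/
def HasCopy {α β : Type*} (G : SimpleGraph α) (F : SimpleGraph β) : Prop :=
  ∃ f : β → α, Function.Injective f ∧ ∀ ⦃a b⦄, F.Adj a b → G.Adj (f a) (f b)

/-- `exNum G F` is the maximum number of edges of a spanning subgraph of `G`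
containing no copy of `F`. -/
noncomputable def exNum {α β : Type*} [Fintype α] (G : SimpleGraph α) (F : SimpleGraph β) : ℕ :=
  sSup {m | ∃ H : SimpleGraph α, H ≤ G ∧ ¬ HasCopy H F ∧ m = H.edgeSet.ncard}

/-- `kCliques k t` is the disjoint union of `k` copies of the complete graph `K_t`. -/
def kCliques (k t : ℕ) : SimpleGraph (Fin k × Fin t) :=
  SimpleGraph.fromRel (fun p q => p.1 = q.1)

/-- The complete multipartite graph with parts of sizes `n 0, …, n (r-1)`. -/
abbrev completeMultipartite {r : ℕ} (n : Fin r → ℕ) : SimpleGraph (Σ i : Fin r, Fin (n i)) :=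
  completeMultipartiteGraph (fun i => Fin (n i))

/-- The sum of `x` over the part of the (labelled) partition `g` with label `i`. -/
def partSum {r s : ℕ} (x : Fin r → ℕ) (g : Fin r → Fin s) (i : Fin s) : ℕ :=
  ∑ a ∈ Finset.univ.filter (fun a => g a = i), x a

/-- The sum, over unordered pairs of distinct parts of the (labelled) partition `g`,
of the products of the part sums of `x`. -/
def pairProdSum {r s : ℕ} (x : Fin r → ℕ) (g : Fin r → Fin s) : ℕ :=
  ∑ p ∈ Finset.univ.filter (fun p : Fin s × Fin s => p.1 < p.2),
    partSum x g p.1 * partSum x g p.2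

/-- The function `f_t` : the maximum, over all partitions of `{0, …, r-1}` into `t-1`
nonempty parts (encoded as surjections onto `Fin (t-1)`), of the sum over unordered pairs
of distinct parts of the products of the part sums. -/
def fT {r : ℕ} (t : ℕ) (x : Fin r → ℕ) : ℕ :=
  (Finset.univ.filter (fun g : Fin r → Fin (t - 1) => Function.Surjective g)).sup
    (fun g => pairProdSum x g)

/-- A (partial) matching in `H` as a finite set of ordered edges. -/
def IsMatch {V : Type*} (H : SimpleGraph V) (M : Finset (V × V)) : Prop :=
  (∀ p ∈ M, H.Adj p.1 p.2) ∧
  ∀ p ∈ M, ∀ q ∈ M, p ≠ q → p.1 ≠ q.1 ∧ p.1 ≠ q.2 ∧ p.2 ≠ q.1 ∧ p.2 ≠ q.2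

lemma isMatch_subset {V : Type*} {H : SimpleGraph V} {M M' : Finset (V × V)}
    (h : IsMatch H M) (hsub : M' ⊆ M) : IsMatch H M' :=
  ⟨fun p hp => h.1 p (hsub hp), fun p hp q hq hpq => h.2 p (hsub hp) q (hsub hq) hpq⟩

lemma hasCopy_of_isMatch {V : Type*} {H : SimpleGraph V} {M : Finset (V × V)} {k : ℕ}
    (h : IsMatch H M) (hcard : M.card = k) : HasCopy H (kCliques k 2) := by
  classical
  have e : M ≃ Fin k := M.equivFin.trans (finCongr hcard)
  refine ⟨fun x => if x.2 = 0 then ((e.symm x.1 : M) : V × V).1 else ((e.symm x.1 : M) : V × V).2,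
    ?_, ?_⟩
  · intro ⟨i, a⟩ ⟨j, b⟩ hab
    simp only at hab
    set p := ((e.symm i : M) : V × V) with hp
    set q := ((e.symm j : M) : V × V) with hq
    have hpM : p ∈ M := (e.symm i).2
    have hqM : q ∈ M := (e.symm j).2
    have hpq : p = q := by
      by_contra hpqe
      have hd := h.2 p hpM q hqM hpqe
      fin_cases a <;> fin_cases b <;> simp at hab
      exacts [hd.1 hab, hd.2.1 hab, hd.2.2.1 hab, hd.2.2.2 hab]
    have hij : i = j := e.symm.injective (Subtype.ext (by rw [← hp, ← hq, hpq]))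
    subst hij
    have hne : p.1 ≠ p.2 := (h.1 p hpM).ne
    fin_cases a <;> fin_cases b <;> simp_all
  · rintro ⟨i, a⟩ ⟨j, b⟩ hab
    rw [kCliques, SimpleGraph.fromRel_adj] at hab
    obtain ⟨hne, hij⟩ := hab
    have hij : i = j := by simpa using hij.elim id Eq.symm
    subst hij
    have hadj := h.1 _ (e.symm i).2
    have hne' : a ≠ b := fun h' => hne (by rw [h'])
    fin_cases a <;> fin_cases b <;> simp_all
    all_goals first | exact hadj | exact hadj.symm

lemma isMatch_of_hasCopy {V : Type*} [DecidableEq V] {H : SimpleGraph V} {k : ℕ}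
    (h : HasCopy H (kCliques k 2)) : ∃ M : Finset (V × V), IsMatch H M ∧ M.card = k := by
  obtain ⟨f, hinj, hadj⟩ := h
  refine ⟨Finset.image (fun i : Fin k => (f (i, 0), f (i, 1))) Finset.univ, ⟨?_, ?_⟩, ?_⟩
  · intro p hp
    simp only [Finset.mem_image] at hp
    obtain ⟨i, _, rfl⟩ := hp
    exact hadj (by rw [kCliques, SimpleGraph.fromRel_adj]; exact ⟨by simp, Or.inl rfl⟩)
  · intro p hp q hq hpq
    simp only [Finset.mem_image] at hp hq
    obtain ⟨i, _, rfl⟩ := hp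
    obtain ⟨j, _, rfl⟩ := hq
    have hij : i ≠ j := fun h' => hpq (by rw [h'])
    refine ⟨fun h' => hij ?_, fun h' => hij ?_, fun h' => hij ?_, fun h' => hij ?_⟩ <;>
      simpa using congrArg Prod.fst (hinj h')
  · rw [Finset.card_image_of_injective _ (fun i j hij => by
      simpa using congrArg Prod.fst (hinj (congrArg Prod.fst hij))), Finset.card_univ,
      Fintype.card_fin]

section Core
variable {V : Type*} [DecidableEq V] {H : SimpleGraph V} {M : Finset (V × V)}

/-- endpoints of a matching -/
def mEnds [DecidableEq V] (M : Finset (V × V)) : Finset V :=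
  M.image Prod.fst ∪ M.image Prod.snd

lemma mem_mEnds {u : V} : u ∈ mEnds M ↔ ∃ p ∈ M, u = p.1 ∨ u = p.2 := by
  simp only [mEnds, Finset.mem_union, Finset.mem_image]
  constructor
  · rintro (⟨p, hp, rfl⟩ | ⟨p, hp, rfl⟩)
    exacts [⟨p, hp, Or.inl rfl⟩, ⟨p, hp, Or.inr rfl⟩]
  · rintro ⟨p, hp, rfl | rfl⟩
    exacts [Or.inl ⟨p, hp, rfl⟩, Or.inr ⟨p, hp, rfl⟩]

lemma fst_mem_mEnds {p : V × V} (hp : p ∈ M) : p.1 ∈ mEnds M :=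
  mem_mEnds.2 ⟨p, hp, Or.inl rfl⟩

lemma snd_mem_mEnds {p : V × V} (hp : p ∈ M) : p.2 ∈ mEnds M :=
  mem_mEnds.2 ⟨p, hp, Or.inr rfl⟩

lemma card_mEnds (hM : IsMatch H M) : (mEnds M).card = 2 * M.card := by
  rw [mEnds, Finset.card_union_of_disjoint, Finset.card_image_of_injOn,
    Finset.card_image_of_injOn]
  · omega
  · intro p hp q hq hpq
    by_contra hne
    exact (hM.2 p hp q hq hne).2.2.2 hpq
  · intro p hp q hq hpq
    by_contra hne
    exact (hM.2 p hp q hq hne).1 hpq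
  · rw [Finset.disjoint_left]
    intro a ha hb
    rw [Finset.mem_image] at ha hb
    obtain ⟨p, hp, rfl⟩ := ha
    obtain ⟨q, hq, hqa⟩ := hb
    by_cases hpq : p = q
    · exact (hM.1 p hp).ne (by subst hpq; exact hqa.symm)
    · exact (hM.2 p hp q hq hpq).2 |>.1 hqa.symm

lemma sum_mEnds (hM : IsMatch H M) (f : V → ℕ) :
    ∑ u ∈ mEnds M, f u = ∑ p ∈ M, (f p.1 + f p.2) := by
  rw [mEnds, Finset.sum_union, Finset.sum_image, Finset.sum_image, ← Finset.sum_add_distrib]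
  · intro p hp q hq hpq
    by_contra hne
    exact (hM.2 p hp q hq hne).2.2.2 hpq
  · intro p hp q hq hpq
    by_contra hne
    exact (hM.2 p hp q hq hne).1 hpq
  · rw [Finset.disjoint_left]
    intro a ha hb
    rw [Finset.mem_image] at ha hb
    obtain ⟨p, hp, rfl⟩ := ha
    obtain ⟨q, hq, hqa⟩ := hb
    by_cases hpq : p = q
    · exact (hM.1 p hp).ne (by subst hpq; exact hqa.symm)
    · exact (hM.2 p hp q hq hpq).2 |>.1 hqa.symm


section Augment
variable (hM : IsMatch H M) (hmax : ∀ M', IsMatch H M' → M'.card ≤ M.card)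
include hM hmax

lemma not_adj_outside {u v : V} (hu : u ∉ mEnds M) (hv : v ∉ mEnds M) : ¬H.Adj u v := by
  intro hadj
  have hnotin : (u, v) ∉ M := fun h => hu (fst_mem_mEnds h)
  have hM' : IsMatch H (insert (u, v) M) := by
    constructor
    · intro p hp
      rcases Finset.mem_insert.1 hp with rfl | hp
      · exact hadj
      · exact hM.1 p hp
    · intro p hp q hq hpq
      rcases Finset.mem_insert.1 hp with rfl | hp <;> rcases Finset.mem_insert.1 hq with rfl | hq
      · exact absurd rfl hpq
      · exact ⟨fun h => hu (mem_mEnds.2 ⟨q, hq, Or.inl h⟩),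
          fun h => hu (mem_mEnds.2 ⟨q, hq, Or.inr h⟩),
          fun h => hv (mem_mEnds.2 ⟨q, hq, Or.inl h⟩),
          fun h => hv (mem_mEnds.2 ⟨q, hq, Or.inr h⟩)⟩
      · exact ⟨fun h => hu (mem_mEnds.2 ⟨p, hp, Or.inl h.symm⟩),
          fun h => hv (mem_mEnds.2 ⟨p, hp, Or.inl h.symm⟩),
          fun h => hu (mem_mEnds.2 ⟨p, hp, Or.inr h.symm⟩),
          fun h => hv (mem_mEnds.2 ⟨p, hp, Or.inr h.symm⟩)⟩
      · exact hM.2 p hp q hq hpq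
  have := hmax _ hM'
  rw [Finset.card_insert_of_notMem hnotin] at this
  omega

lemma no_augment {p : V × V} (hp : p ∈ M) {u v : V} (hu : u ∉ mEnds M) (hv : v ∉ mEnds M)
    (huv : u ≠ v) (h1 : H.Adj p.1 u) (h2 : H.Adj p.2 v) : False := by
  have hp1u : p.1 ≠ u := h1.ne
  have hp2v : p.2 ≠ v := h2.ne
  have hp12 : p.1 ≠ p.2 := (hM.1 p hp).ne
  have hp1v : p.1 ≠ v := fun h => hv (h ▸ fst_mem_mEnds hp)
  have hp2u : p.2 ≠ u := fun h => hu (h ▸ snd_mem_mEnds hp)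
  set M' := insert (p.1, u) (insert (p.2, v) (M.erase p)) with hM'def
  have hQ : ∀ q ∈ M.erase p, q.1 ≠ p.1 ∧ q.1 ≠ p.2 ∧ q.2 ≠ p.1 ∧ q.2 ≠ p.2 ∧
      q.1 ≠ u ∧ q.1 ≠ v ∧ q.2 ≠ u ∧ q.2 ≠ v := by
    intro q hq
    obtain ⟨hqp, hqM⟩ := Finset.mem_erase.1 hq
    obtain ⟨a1, a2, a3, a4⟩ := hM.2 q hqM p hp hqp
    exact ⟨a1, a2, a3, a4, fun h => hu (h ▸ fst_mem_mEnds hqM),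
      fun h => hv (h ▸ fst_mem_mEnds hqM), fun h => hu (h ▸ snd_mem_mEnds hqM),
      fun h => hv (h ▸ snd_mem_mEnds hqM)⟩
  have hM'm : IsMatch H M' := by
    constructor
    · intro q hq
      rcases Finset.mem_insert.1 hq with rfl | hq
      · exact h1
      rcases Finset.mem_insert.1 hq with rfl | hq
      · exact h2
      · exact hM.1 q (Finset.mem_erase.1 hq).2
    · intro q1 hq1 q2 hq2 hne
      rcases Finset.mem_insert.1 hq1 with rfl | hq1
      · rcases Finset.mem_insert.1 hq2 with rfl | hq2
        · exact absurd rfl hne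
        rcases Finset.mem_insert.1 hq2 with rfl | hq2
        · exact ⟨hp12, hp1v, hp2u.symm, huv⟩
        · obtain ⟨a1, a2, a3, a4, a5, a6, a7, a8⟩ := hQ q2 hq2
          exact ⟨a1.symm, a3.symm, a5.symm, a7.symm⟩
      rcases Finset.mem_insert.1 hq1 with rfl | hq1
      · rcases Finset.mem_insert.1 hq2 with rfl | hq2
        · exact ⟨hp12.symm, hp2u, hp1v.symm, huv.symm⟩
        rcases Finset.mem_insert.1 hq2 with rfl | hq2
        · exact absurd rfl hne
        · obtain ⟨a1, a2, a3, a4, a5, a6, a7, a8⟩ := hQ q2 hq2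
          exact ⟨a2.symm, a4.symm, a6.symm, a8.symm⟩
      · obtain ⟨a1, a2, a3, a4, a5, a6, a7, a8⟩ := hQ q1 hq1
        rcases Finset.mem_insert.1 hq2 with rfl | hq2
        · exact ⟨a1, a5, a3, a7⟩
        rcases Finset.mem_insert.1 hq2 with rfl | hq2
        · exact ⟨a2, a6, a4, a8⟩
        · obtain ⟨hq1p, hq1M⟩ := Finset.mem_erase.1 hq1
          obtain ⟨hq2p, hq2M⟩ := Finset.mem_erase.1 hq2
          exact hM.2 q1 hq1M q2 hq2M hne
  have hpv_ne : (p.2, v) ∉ M.erase p := by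
    intro h
    exact hv (snd_mem_mEnds (Finset.mem_erase.1 h).2)
  have hpu_ne : (p.1, u) ∉ insert (p.2, v) (M.erase p) := by
    intro h
    rcases Finset.mem_insert.1 h with h | h
    · exact hp12 (congrArg Prod.fst h)
    · exact hu (snd_mem_mEnds (Finset.mem_erase.1 h).2)
  have hcard : M'.card = M.card + 1 := by
    rw [hM'def, Finset.card_insert_of_notMem hpu_ne, Finset.card_insert_of_notMem hpv_ne,
      Finset.card_erase_of_mem hp]
    have : 1 ≤ M.card := Finset.card_pos.2 ⟨p, hp⟩
    omega
  have := hmax _ hM'm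
  omega

end Augment

end Core

section CoreUB
variable {r : ℕ} {V : Type*} [Fintype V] [DecidableEq V]

set_option maxHeartbeats 1000000 in
lemma core_UB (hr : 2 ≤ r) (π : V → Fin r) :
    ∀ k, 1 ≤ k → ∀ b0, k ≤ b0 → ∀ (H : SimpleGraph V), (∀ a b, H.Adj a b → π a ≠ π b) →
    ∀ S : Finset V, (∀ i, b0 ≤ (S.filter (fun v => π v = i)).card) →
    (∀ a b, H.Adj a b → a ∈ S) →
    (∀ M : Finset (V × V), IsMatch H M → M.card < k) →
    H.edgeSet.ncard ≤ (k - 1) * (S.card - b0) := by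
  intro k hk
  induction k, hk using Nat.le_induction with
  | base =>
    intro b0 hkb0 H hpart S hS hsupp hno
    have he : H.edgeSet = ∅ := by
      ext e
      simp only [Set.mem_empty_iff_false, iff_false]
      induction e with
      | _ a b =>
        intro hab
        rw [SimpleGraph.mem_edgeSet] at hab
        have h1 : IsMatch H {(a, b)} := by
          constructor
          · intro p hp; rw [Finset.mem_singleton] at hp; subst hp; exact hab
          · intro p hp q hq hpq
            rw [Finset.mem_singleton] at hp hq
            exact absurd (hp.trans hq.symm) hpq
        have := hno _ h1
        simp at this
    simp [he]
  | succ k hk1 ih =>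
    intro b0 hkb0 H hpart S hS hsupp hno
    classical
    set s : Fin r → ℕ := fun i => (S.filter (fun v => π v = i)).card with hs_def
    set b := b0 with hb_def
    set a := S.card with ha_def
    have hb_le : ∀ i, b ≤ s i := fun i => hS i
    have hbk : k + 1 ≤ b := hkb0
    have hsum : a = ∑ i, s i :=
      Finset.card_eq_sum_card_fiberwise (fun v _ => Finset.mem_univ (π v))
    have hba : b ≤ a :=
      le_trans (hb_le ⟨0, by omega⟩) (Finset.card_filter_le _ _)
    have hDge : (r - 1) * (k + 1) ≤ a - b := by
      set i0 : Fin r := ⟨0, by omega⟩ with hi0_def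
      have h1 : a = s i0 + ∑ i ∈ Finset.univ.erase i0, s i := by
        rw [hsum, ← Finset.add_sum_erase _ s (Finset.mem_univ i0)]
      have h2 : (Finset.univ.erase i0).card * (k + 1) ≤ ∑ i ∈ Finset.univ.erase i0, s i := by
        have := Finset.card_nsmul_le_sum (Finset.univ.erase i0) s (k + 1)
          (fun i _ => le_trans hbk (hb_le i))
        simpa [mul_comm] using this
      have h3 : (Finset.univ.erase i0).card = r - 1 := by
        rw [Finset.card_erase_of_mem (Finset.mem_univ i0), Finset.card_univ, Fintype.card_fin]
      have hb_eq : b ≤ s i0 := hb_le i0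
      rw [h3] at h2
      omega
    have hD2 : k + 1 ≤ a - b := by
      refine le_trans ?_ hDge
      have h1 : 1 ≤ r - 1 := by omega
      nlinarith
    -- degree bound
    have hdeg : ∀ v : V, H.degree v ≤ a - b := by
      intro v
      have hsub : H.neighborFinset v ⊆ S \ S.filter (fun u => π u = π v) := by
        intro u hu
        rw [SimpleGraph.mem_neighborFinset] at hu
        rw [Finset.mem_sdiff, Finset.mem_filter]
        exact ⟨hsupp u v hu.symm, fun hc => hpart u v hu.symm hc.2⟩
      calc H.degree v ≤ (S \ S.filter (fun u => π u = π v)).card := Finset.card_le_card hsub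
        _ = a - s (π v) := by rw [Finset.card_sdiff_of_subset (Finset.filter_subset _ _)]
        _ ≤ a - b := Nat.sub_le_sub_left (hb_le _) _
    by_cases hcase : ∃ x y, H.Adj x y ∧ H.degree x + H.degree y ≤ (a - b) + (k + 1) - 1
    · -- Case 1 : delete the two endpoints, use induction
      obtain ⟨x, y, hxy, hdxy⟩ := hcase
      have hxS : x ∈ S := hsupp x y hxy
      have hyS : y ∈ S := hsupp y x hxy.symm
      have hxyne : x ≠ y := hxy.ne
      have hπxy : π x ≠ π y := hpart x y hxy
      set H' : SimpleGraph V :=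
        { Adj := fun u v => H.Adj u v ∧ u ≠ x ∧ u ≠ y ∧ v ≠ x ∧ v ≠ y
          symm := ⟨fun u v ⟨h1, h2, h3, h4, h5⟩ => ⟨h1.symm, h4, h5, h2, h3⟩⟩
          loopless := ⟨fun u ⟨h1, _⟩ => H.loopless.irrefl u h1⟩ } with hH'_def
      set S' := S \ {x, y} with hS'_def
      have hfilter' : ∀ i, (S'.filter (fun v => π v = i)) =
          (S.filter (fun v => π v = i)) \ {x, y} := by
        intro i
        ext v
        simp only [hS'_def, Finset.mem_filter, Finset.mem_sdiff, Finset.mem_insert,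
          Finset.mem_singleton]
        tauto
      have hs' : ∀ i, (S.filter (fun v => π v = i)).card - 1 ≤
          (S'.filter (fun v => π v = i)).card := by
        intro i
        rw [hfilter' i]
        have h1 := Finset.card_sdiff_add_card_inter (S.filter (fun v => π v = i)) {x, y}
        have h2 : ((S.filter (fun v => π v = i)) ∩ {x, y}).card ≤ 1 := by
          by_cases hx : x ∈ S.filter (fun v => π v = i)
          · have hy : y ∉ S.filter (fun v => π v = i) := by
              rw [Finset.mem_filter] at hx ⊢
              intro hy
              exact hπxy (hx.2.trans hy.2.symm)
            have : (S.filter (fun v => π v = i)) ∩ {x, y} ⊆ {x} := by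
              intro v hv
              simp only [Finset.mem_inter, Finset.mem_insert, Finset.mem_singleton] at hv
              rcases hv.2 with rfl | rfl
              · exact Finset.mem_singleton_self _
              · exact absurd hv.1 hy
            simpa using Finset.card_le_card this
          · have : (S.filter (fun v => π v = i)) ∩ {x, y} ⊆ {y} := by
              intro v hv
              simp only [Finset.mem_inter, Finset.mem_insert, Finset.mem_singleton] at hv
              rcases hv.2 with rfl | rfl
              · exact absurd hv.1 hx
              · exact Finset.mem_singleton_self _
            simpa using Finset.card_le_card this
        omega
      have hS'card : S'.card = a - 2 := by
        rw [hS'_def, Finset.card_sdiff_of_subset (by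
          intro v hv
          rcases Finset.mem_insert.1 hv with rfl | hv
          · exact hxS
          · rw [Finset.mem_singleton] at hv; subst hv; exact hyS)]
        rw [Finset.card_pair hxyne]
      have hno' : ∀ M : Finset (V × V), IsMatch H' M → M.card < k := by
        intro M' hM'
        by_contra hcon
        push_neg at hcon
        obtain ⟨M'', hsub, hcard''⟩ := Finset.exists_subset_card_eq hcon
        have hM'' : IsMatch H' M'' := isMatch_subset hM' hsub
        have hends : ∀ q ∈ M'', q.1 ≠ x ∧ q.1 ≠ y ∧ q.2 ≠ x ∧ q.2 ≠ y := by
          intro q hq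
          obtain ⟨h1, h2, h3, h4, h5⟩ := hM''.1 q hq
          exact ⟨h2, h3, h4, h5⟩
        have hT : IsMatch H (insert (x, y) M'') := by
          constructor
          · intro p hp
            rcases Finset.mem_insert.1 hp with rfl | hp
            · exact hxy
            · exact (hM''.1 p hp).1
          · intro p hp q hq hpq
            rcases Finset.mem_insert.1 hp with rfl | hp <;>
              rcases Finset.mem_insert.1 hq with rfl | hq
            · exact absurd rfl hpq
            · obtain ⟨e1, e2, e3, e4⟩ := hends q hq
              exact ⟨fun h => e1 h.symm, fun h => e3 h.symm, fun h => e2 h.symm,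
                fun h => e4 h.symm⟩
            · obtain ⟨e1, e2, e3, e4⟩ := hends p hp
              exact ⟨e1, e2, e3, e4⟩
            · exact ⟨(hM''.2 p hp q hq hpq).1, (hM''.2 p hp q hq hpq).2.1,
                (hM''.2 p hp q hq hpq).2.2.1, (hM''.2 p hp q hq hpq).2.2.2⟩
        have hxyM : (x, y) ∉ M'' := by
          intro h
          exact (hends _ h).1 rfl
        have := hno _ hT
        rw [Finset.card_insert_of_notMem hxyM, hcard''] at this
        omega
      have hIH := ih (b0 - 1) (by omega) H' (fun u v h => hpart u v h.1) S'
        (fun i => by have h1 := hS i; have h2 := hs' i; omega)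
        (fun u v h => by
          rw [hS'_def, Finset.mem_sdiff]
          refine ⟨hsupp u v h.1, ?_⟩
          simp only [Finset.mem_insert, Finset.mem_singleton]
          push_neg
          exact ⟨h.2.1, h.2.2.1⟩) hno'
      -- edge counting
      have hedge : H.edgeSet ⊆ H'.edgeSet ∪ H.incidenceSet x ∪
          (H.incidenceSet y \ {s(x, y)}) := by
        intro e he
        induction e with
        | _ u v =>
          rw [SimpleGraph.mem_edgeSet] at he
          by_cases hu : u = x ∨ v = x
          · refine Or.inl (Or.inr ?_)
            rcases hu with rfl | rfl
            · exact ⟨(SimpleGraph.mem_edgeSet H).2 he, Sym2.mem_mk_left _ _⟩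
            · exact ⟨(SimpleGraph.mem_edgeSet H).2 he, Sym2.mem_mk_right _ _⟩
          push_neg at hu
          by_cases hv : u = y ∨ v = y
          · refine Or.inr ⟨?_, ?_⟩
            · rcases hv with rfl | rfl
              · exact ⟨(SimpleGraph.mem_edgeSet H).2 he, Sym2.mem_mk_left _ _⟩
              · exact ⟨(SimpleGraph.mem_edgeSet H).2 he, Sym2.mem_mk_right _ _⟩
            · rw [Set.mem_singleton_iff]
              intro hc
              rcases Sym2.eq_iff.1 hc with ⟨h1, h2⟩ | ⟨h1, h2⟩
              · exact hu.1 h1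
              · exact hu.2 h2
          push_neg at hv
          exact Or.inl (Or.inl ((SimpleGraph.mem_edgeSet H').2 ⟨he, hu.1, hv.1, hu.2, hv.2⟩))
      have hix : (H.incidenceSet x).ncard = H.degree x := by
        rw [Set.ncard_eq_toFinset_card', Set.toFinset_card]
        exact H.card_incidenceSet_eq_degree x
      have hiy : (H.incidenceSet y).ncard = H.degree y := by
        rw [Set.ncard_eq_toFinset_card', Set.toFinset_card]
        exact H.card_incidenceSet_eq_degree y
      have hiy' : (H.incidenceSet y \ {s(x, y)}).ncard = H.degree y - 1 := by
        rw [Set.ncard_diff_singleton_of_mem, hiy]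
        rw [Sym2.eq_swap]
        exact (H.mem_incidenceSet y x).2 hxy.symm
      have hcount : H.edgeSet.ncard ≤ H'.edgeSet.ncard + H.degree x + (H.degree y - 1) := by
        calc H.edgeSet.ncard ≤ (H'.edgeSet ∪ H.incidenceSet x ∪
            (H.incidenceSet y \ {s(x, y)})).ncard :=
              Set.ncard_le_ncard hedge (Set.toFinite _)
          _ ≤ (H'.edgeSet ∪ H.incidenceSet x).ncard +
              (H.incidenceSet y \ {s(x, y)}).ncard := Set.ncard_union_le _ _
          _ ≤ H'.edgeSet.ncard + (H.incidenceSet x).ncard +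
              (H.incidenceSet y \ {s(x, y)}).ncard := by
                have := Set.ncard_union_le H'.edgeSet (H.incidenceSet x)
                omega
          _ = H'.edgeSet.ncard + H.degree x + (H.degree y - 1) := by rw [hix, hiy']
      -- numeric conclusion
      have hdy1 : 1 ≤ H.degree y := by
        rw [← SimpleGraph.card_neighborFinset_eq_degree]
        exact Finset.card_pos.2 ⟨x, (SimpleGraph.mem_neighborFinset _ _ _).2 hxy.symm⟩
      have key : H'.edgeSet.ncard ≤ (k - 1) * ((a - b) - 1) := by
        refine le_trans hIH (Nat.mul_le_mul_left _ ?_)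
        have h1 : S'.card = a - 2 := hS'card
        omega
      have hkD : H.edgeSet.ncard ≤ (k + 1 - 1) * (a - b) := by
        have e1 : H.edgeSet.ncard ≤ (k - 1) * ((a - b) - 1) + ((a - b) + (k + 1) - 1 - 1) := by
          have := hcount
          omega
        have e2 : (k - 1) * ((a - b) - 1) + ((a - b) + (k + 1) - 1 - 1) ≤ k * (a - b) := by
          obtain ⟨k1, rfl⟩ : ∃ k1, k = k1 + 1 := ⟨k - 1, by omega⟩
          obtain ⟨D1, hD1⟩ : ∃ D1, a - b = D1 + 2 := ⟨(a - b) - 2, by omega⟩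
          rw [hD1]
          have h1 : k1 + 1 - 1 = k1 := by omega
          have h2 : D1 + 2 - 1 = D1 + 1 := by omega
          have h3 : D1 + 2 + (k1 + 1 + 1) - 1 - 1 = D1 + k1 + 2 := by omega
          rw [h1, h2, h3]
          have h4 : (k1 + 1) * (D1 + 2) = k1 * (D1 + 1) + (D1 + k1 + 2) := by ring
          linarith
        simpa using le_trans e1 e2
      exact hkD
    · -- Case 2 : every edge has large degree sum
      push_neg at hcase
      have hbig : ∀ x y, H.Adj x y → (a - b) + (k + 1) ≤ H.degree x + H.degree y := by
        intro x y hxy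
        have := hcase x y hxy
        omega
      have hdegk : ∀ x y, H.Adj x y → k + 1 ≤ H.degree x := by
        intro x y hxy
        have h1 := hbig x y hxy
        have h2 := hdeg y
        omega
      by_contra hcon
      push_neg at hcon
      obtain ⟨M, hMF, hmax'⟩ := Finset.exists_max_image
        ((Finset.univ : Finset (Finset (V × V))).filter (fun M => IsMatch H M))
        Finset.card ⟨∅, Finset.mem_filter.2 ⟨Finset.mem_univ _,
          ⟨fun p hp => absurd hp (Finset.notMem_empty p),
           fun p hp => absurd hp (Finset.notMem_empty p)⟩⟩⟩
      have hM : IsMatch H M := (Finset.mem_filter.1 hMF).2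
      have hmax : ∀ M', IsMatch H M' → M'.card ≤ M.card := fun M' h =>
        hmax' M' (Finset.mem_filter.2 ⟨Finset.mem_univ _, h⟩)
      set m := M.card with hm_def
      have hmk : m ≤ k := by have := hno M hM; omega
      set U := mEnds M with hU_def
      have hUcard : U.card = 2 * m := card_mEnds hM
      set inU : V → ℕ := fun v => ((H.neighborFinset v).filter (fun u => u ∈ U)).card
        with hinU_def
      set outW : V → ℕ := fun v => ((H.neighborFinset v).filter (fun u => u ∉ U)).card
        with houtW_def
      have hsplit : ∀ v, H.degree v = inU v + outW v := by
        intro v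
        rw [← SimpleGraph.card_neighborFinset_eq_degree]
        exact (Finset.card_filter_add_card_filter_not (fun u => u ∈ U)).symm
      have houtW0 : ∀ w, w ∉ U → outW w = 0 := by
        intro w hw
        rw [houtW_def]
        simp only [Finset.card_eq_zero]
        rw [Finset.filter_eq_empty_iff]
        intro u hu
        rw [SimpleGraph.mem_neighborFinset] at hu
        intro huU
        exact not_adj_outside hM hmax hw huU hu
      set X := ∑ w ∈ Finset.univ \ U, inU w with hX_def
      have hdouble : ∑ u ∈ U, outW u = X := by
        have h1 : ((Finset.univ ×ˢ Finset.univ).filter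
            (fun p : V × V => H.Adj p.1 p.2 ∧ p.1 ∈ U ∧ p.2 ∉ U)).card = ∑ u ∈ U, outW u := by
          rw [Finset.card_eq_sum_card_fiberwise (f := Prod.fst) (t := U)
            (fun p hp => (Finset.mem_filter.1 hp).2.2.1)]
          refine Finset.sum_congr rfl (fun u hu => ?_)
          rw [houtW_def]
          refine Finset.card_bij (fun p _ => p.2) ?_ ?_ ?_
          · intro p hp
            obtain ⟨hp1, hp2⟩ := Finset.mem_filter.1 hp
            obtain ⟨hadj, _, h4⟩ := (Finset.mem_filter.1 hp1).2
            rw [Finset.mem_filter, SimpleGraph.mem_neighborFinset]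
            have hadj' : H.Adj u p.2 := by rw [← hp2]; exact hadj
            exact ⟨hadj', h4⟩
          · intro p hp q hq heq
            have hp2 := (Finset.mem_filter.1 hp).2
            have hq2 := (Finset.mem_filter.1 hq).2
            exact Prod.ext (hp2.trans hq2.symm) heq
          · intro v hv
            rw [Finset.mem_filter, SimpleGraph.mem_neighborFinset] at hv
            exact ⟨(u, v), Finset.mem_filter.2 ⟨Finset.mem_filter.2
              ⟨Finset.mem_product.2 ⟨Finset.mem_univ _, Finset.mem_univ _⟩,
                hv.1, hu, hv.2⟩, rfl⟩, rfl⟩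
        have h2 : ((Finset.univ ×ˢ Finset.univ).filter
            (fun p : V × V => H.Adj p.1 p.2 ∧ p.1 ∈ U ∧ p.2 ∉ U)).card =
            ∑ w ∈ Finset.univ \ U, inU w := by
          rw [Finset.card_eq_sum_card_fiberwise (f := Prod.snd) (t := Finset.univ \ U)
            (fun p hp => Finset.mem_sdiff.2 ⟨Finset.mem_univ _, (Finset.mem_filter.1 hp).2.2.2⟩)]
          refine Finset.sum_congr rfl (fun w hw => ?_)
          rw [hinU_def]
          refine Finset.card_bij (fun p _ => p.1) ?_ ?_ ?_
          · intro p hp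
            obtain ⟨hp1, hp2⟩ := Finset.mem_filter.1 hp
            obtain ⟨hadj, h3, _⟩ := (Finset.mem_filter.1 hp1).2
            rw [Finset.mem_filter, SimpleGraph.mem_neighborFinset]
            have hadj' : H.Adj p.1 w := by rw [← hp2]; exact hadj
            exact ⟨hadj'.symm, h3⟩
          · intro p hp q hq heq
            have hp2 := (Finset.mem_filter.1 hp).2
            have hq2 := (Finset.mem_filter.1 hq).2
            exact Prod.ext heq (hp2.trans hq2.symm)
          · intro v hv
            rw [Finset.mem_filter, SimpleGraph.mem_neighborFinset] at hv
            exact ⟨(v, w), Finset.mem_filter.2 ⟨Finset.mem_filter.2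
              ⟨Finset.mem_product.2 ⟨Finset.mem_univ _, Finset.mem_univ _⟩,
                hv.1.symm, hv.2, (Finset.mem_sdiff.1 hw).2⟩, rfl⟩, rfl⟩
        rw [← h1, h2]
      have hWdeg : ∀ w, w ∉ U → H.degree w = inU w := by
        intro w hw
        have := hsplit w
        have := houtW0 w hw
        omega
      set W1 := (Finset.univ \ U).filter (fun w => H.degree w ≠ 0) with hW1_def
      have hXW1 : X = ∑ w ∈ W1, inU w := by
        rw [hX_def]
        refine (Finset.sum_subset (Finset.filter_subset _ _) ?_).symm
        intro w hw hw1
        have hd0 : H.degree w = 0 := by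
          by_contra h
          exact hw1 (Finset.mem_filter.2 ⟨hw, h⟩)
        have := hWdeg w (Finset.mem_sdiff.1 hw).2
        omega
      have hXlow : (k + 1) * W1.card ≤ X := by
        rw [hXW1]
        have hb1 : ∀ w ∈ W1, k + 1 ≤ inU w := by
          intro w hw
          obtain ⟨hw2, hdw⟩ := Finset.mem_filter.1 hw
          obtain ⟨u, hu⟩ : ∃ u, H.Adj w u := by
            have h0 : (H.neighborFinset w).Nonempty := by
              rw [← Finset.card_pos, SimpleGraph.card_neighborFinset_eq_degree]
              omega
            obtain ⟨u, hu⟩ := h0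
            exact ⟨u, (SimpleGraph.mem_neighborFinset _ _ _).1 hu⟩
          have h1 := hdegk w u hu
          have h2 := hWdeg w (Finset.mem_sdiff.1 hw2).2
          omega
        have := Finset.card_nsmul_le_sum W1 inU (k + 1) hb1
        rw [smul_eq_mul] at this
        rw [mul_comm]
        exact this
      have hfsub : ∀ v, ((H.neighborFinset v).filter (fun u => u ∉ U)) ⊆ W1 := by
        intro v u hu
        rw [Finset.mem_filter, SimpleGraph.mem_neighborFinset] at hu
        refine Finset.mem_filter.2 ⟨Finset.mem_sdiff.2 ⟨Finset.mem_univ _, hu.2⟩, ?_⟩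
        have := hdegk u v hu.1.symm
        omega
      have houtW_le : ∀ v, outW v ≤ W1.card := fun v => Finset.card_le_card (hfsub v)
      have hpair : ∀ p ∈ M, 2 ≤ W1.card → outW p.1 + outW p.2 ≤ W1.card := by
        intro p hp h2
        by_cases hA1 : ((H.neighborFinset p.1).filter (fun u => u ∉ U)) = ∅
        · have : outW p.1 = 0 := by rw [houtW_def]; simp [hA1]
          have := houtW_le p.2
          omega
        by_cases hA2 : ((H.neighborFinset p.2).filter (fun u => u ∉ U)) = ∅
        · have : outW p.2 = 0 := by rw [houtW_def]; simp [hA2]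
          have := houtW_le p.1
          omega
        obtain ⟨u0, hu0⟩ := Finset.nonempty_iff_ne_empty.2 hA1
        obtain ⟨v0, hv0⟩ := Finset.nonempty_iff_ne_empty.2 hA2
        have hkey : ∀ u ∈ (H.neighborFinset p.1).filter (fun u => u ∉ U),
            ∀ v ∈ (H.neighborFinset p.2).filter (fun u => u ∉ U), u = v := by
          intro u hu v hv
          by_contra hne'
          rw [Finset.mem_filter, SimpleGraph.mem_neighborFinset] at hu hv
          exact no_augment hM hmax hp hu.2 hv.2 hne' hu.1 hv.1
        have hc1 : ((H.neighborFinset p.1).filter (fun u => u ∉ U)).card ≤ 1 :=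
          Finset.card_le_one.2 (fun x hx y hy =>
            (hkey x hx v0 hv0).trans (hkey y hy v0 hv0).symm)
        have hc2 : ((H.neighborFinset p.2).filter (fun u => u ∉ U)).card ≤ 1 :=
          Finset.card_le_one.2 (fun x hx y hy =>
            ((hkey u0 hu0 x hx).symm.trans (hkey u0 hu0 y hy)))
        have e1 : outW p.1 = ((H.neighborFinset p.1).filter (fun u => u ∉ U)).card := rfl
        have e2 : outW p.2 = ((H.neighborFinset p.2).filter (fun u => u ∉ U)).card := rfl
        omega
      have hW1le1 : W1.card ≤ 1 := by
        by_contra hc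
        push_neg at hc
        have h1 : X ≤ m * W1.card := by
          rw [← hdouble, hU_def, sum_mEnds hM outW]
          calc ∑ p ∈ M, (outW p.1 + outW p.2) ≤ ∑ p ∈ M, W1.card :=
                Finset.sum_le_sum (fun p hp => hpair p hp hc)
            _ = m * W1.card := by rw [Finset.sum_const, smul_eq_mul, hm_def]
        have h2 := hXlow
        have h3 : k + 1 ≤ m := Nat.le_of_mul_le_mul_right (le_trans h2 h1) (by omega)
        omega
      have hUdeg : ∑ u ∈ U, H.degree u = ∑ u ∈ U, inU u + X := by
        rw [← hdouble, ← Finset.sum_add_distrib]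
        exact Finset.sum_congr rfl (fun u _ => hsplit u)
      have htot : 2 * H.edgeFinset.card = ∑ u ∈ U, inU u + 2 * X := by
        rw [← SimpleGraph.sum_degrees_eq_twice_card_edges,
          ← Finset.sum_sdiff (Finset.subset_univ U)]
        have hW : ∑ w ∈ Finset.univ \ U, H.degree w = X := by
          rw [hX_def]
          exact Finset.sum_congr rfl (fun w hw => hWdeg w (Finset.mem_sdiff.1 hw).2)
        rw [hW, hUdeg]
        ring
      have hencard : H.edgeSet.ncard = H.edgeFinset.card := Set.ncard_eq_toFinset_card' _
      have hXle : X ≤ W1.card * (2 * m) := by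
        rw [hXW1]
        have : ∀ w ∈ W1, inU w ≤ 2 * m := by
          intro w _
          rw [hinU_def]
          calc ((H.neighborFinset w).filter (fun u => u ∈ U)).card ≤ U.card :=
                Finset.card_le_card (fun x hx => (Finset.mem_filter.1 hx).2)
            _ = 2 * m := hUcard
        have := Finset.sum_le_card_nsmul W1 inU (2 * m) this
        rwa [smul_eq_mul] at this
      by_cases hDbig : 2 * k + 1 ≤ a - b
      · have h1 : ∑ u ∈ U, inU u ≤ 2 * m * (2 * m - 1) := by
          have hb1 : ∀ u ∈ U, inU u ≤ 2 * m - 1 := by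
            intro u hu
            rw [hinU_def]
            have hsub2 : (H.neighborFinset u).filter (fun x => x ∈ U) ⊆ U.erase u := by
              intro x hx
              rw [Finset.mem_filter, SimpleGraph.mem_neighborFinset] at hx
              exact Finset.mem_erase.2 ⟨hx.1.ne', hx.2⟩
            calc ((H.neighborFinset u).filter (fun x => x ∈ U)).card ≤ (U.erase u).card :=
                  Finset.card_le_card hsub2
              _ = 2 * m - 1 := by rw [Finset.card_erase_of_mem hu, hUcard]
          have := Finset.sum_le_card_nsmul U inU (2 * m - 1) hb1
          rw [smul_eq_mul, hUcard] at this
          exact this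
        have h2 : X ≤ 2 * m := by
          have := Nat.mul_le_mul_right (2 * m) hW1le1
          rw [one_mul] at this
          exact le_trans hXle this
        have hE : k * (a - b) < H.edgeFinset.card := by
          rw [← hencard]
          exact lt_of_le_of_lt (le_refl _) (by simpa using hcon)
        have hmm : 2 * m * (2 * m - 1) + 2 * m ≤ 2 * m * (2 * m) := by
          rcases Nat.eq_zero_or_pos m with hm0 | hm
          · simp [hm0]
          · have hx : 2 * m - 1 + 1 = 2 * m := by omega
            have hy : 2 * m * (2 * m - 1) + 2 * m = 2 * m * (2 * m - 1 + 1) := by ring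
            rw [hy, hx]
        have t1 := Nat.mul_le_mul_left k hDbig
        have t2 : k * (2 * k + 1) = 2 * (k * k) + k := by ring
        have t3 : 2 * m * (2 * m) ≤ 4 * (k * k) := by nlinarith [hmk]
        have hk2 : 2 * m ≤ 2 * k := by omega
        linarith [htot, h1, h2, hE, hmm, t1, t2, t3, hk2]
      · push_neg at hDbig
        have hr2 : r = 2 := by
          by_contra hr3
          have h3 : 3 ≤ r := by omega
          have : 2 * (k + 1) ≤ (r - 1) * (k + 1) := by
            have : 2 ≤ r - 1 := by omega
            exact Nat.mul_le_mul_right _ this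
          omega
        have hfin2 : ∀ a' b' i : Fin r, a' ≠ b' → i = a' ∨ i = b' := by
          intro a' b' i hab
          have ha := a'.isLt
          have hb := b'.isLt
          have hi := i.isLt
          have hne2 : a'.val ≠ b'.val := fun h => hab (Fin.ext h)
          have : i.val = a'.val ∨ i.val = b'.val := by omega
          rcases this with h | h
          · exact Or.inl (Fin.ext h)
          · exact Or.inr (Fin.ext h)
        have hU2 : ∀ i : Fin r, (U.filter (fun v => π v = i)).card = m := by
          intro i
          refine (Finset.card_bij (fun p (_ : p ∈ M) => if π p.1 = i then p.1 else p.2)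
            ?_ ?_ ?_).symm
          · intro p hp
            by_cases hc : π p.1 = i
            · simp only [if_pos hc]
              exact Finset.mem_filter.2 ⟨fst_mem_mEnds hp, hc⟩
            · simp only [if_neg hc]
              refine Finset.mem_filter.2 ⟨snd_mem_mEnds hp, ?_⟩
              have hππ : π p.1 ≠ π p.2 := hpart _ _ (hM.1 p hp)
              rcases hfin2 (π p.1) (π p.2) i hππ with h | h
              · exact absurd h.symm hc
              · exact h.symm
          · intro p hp q hq heq
            by_contra hne'
            obtain ⟨d1, d2, d3, d4⟩ := hM.2 p hp q hq hne'
            by_cases h1 : π p.1 = i <;> by_cases h2 : π q.1 = i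
            · simp only [if_pos h1, if_pos h2] at heq; exact d1 heq
            · simp only [if_pos h1, if_neg h2] at heq; exact d2 heq
            · simp only [if_neg h1, if_pos h2] at heq; exact d3 heq
            · simp only [if_neg h1, if_neg h2] at heq; exact d4 heq
          · intro u hu
            obtain ⟨huU, hπu⟩ := Finset.mem_filter.1 hu
            obtain ⟨p, hp, hcase'⟩ := mem_mEnds.1 huU
            rcases hcase' with rfl | rfl
            · exact ⟨p, hp, by simp only [if_pos hπu]⟩
            · refine ⟨p, hp, ?_⟩
              have hππ : π p.1 ≠ π p.2 := hpart _ _ (hM.1 p hp)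
              have hne3 : π p.1 ≠ i := fun h => hππ (h.trans hπu.symm)
              simp only [if_neg hne3]
        have hinU2 : ∀ v, inU v ≤ m := by
          intro v
          rw [hinU_def]
          have hsub2 : (H.neighborFinset v).filter (fun u => u ∈ U) ⊆
              U.filter (fun u => ¬ π u = π v) := by
            intro x hx
            rw [Finset.mem_filter, SimpleGraph.mem_neighborFinset] at hx
            exact Finset.mem_filter.2 ⟨hx.2, fun hc => hpart x v hx.1.symm hc⟩
          have hcc := Finset.card_filter_add_card_filter_not
            (s := U) (p := fun u => π u = π v)
          have h1 : (U.filter (fun u => π u = π v)).card = m := hU2 (π v)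
          have h2 : (U.filter (fun u => ¬ π u = π v)).card = m := by omega
          calc ((H.neighborFinset v).filter (fun u => u ∈ U)).card ≤
              (U.filter (fun u => ¬ π u = π v)).card := Finset.card_le_card hsub2
            _ = m := h2
        have h1 : ∑ u ∈ U, inU u ≤ 2 * m * m := by
          have := Finset.sum_le_card_nsmul U inU m (fun u _ => hinU2 u)
          rw [smul_eq_mul, hUcard] at this
          exact this
        have h2 : X ≤ m := by
          rw [hXW1]
          have := Finset.sum_le_card_nsmul W1 inU m (fun w _ => hinU2 w)
          rw [smul_eq_mul] at this
          have hcc : W1.card * m ≤ 1 * m := Nat.mul_le_mul_right m hW1le1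
          rw [one_mul] at hcc
          exact le_trans this hcc
        have hE : k * (a - b) < H.edgeFinset.card := by
          rw [← hencard]
          exact lt_of_le_of_lt (le_refl _) (by simpa using hcon)
        have hDk : k + 1 ≤ a - b := hD2
        have t1 := Nat.mul_le_mul_left k hDk
        have t2 : k * (k + 1) = k * k + k := by ring
        have t3 : m * m ≤ k * k := Nat.mul_le_mul hmk hmk
        have t4 : 2 * m * m = 2 * (m * m) := by ring
        linarith [htot, h1, h2, hE, t1, t2, t3, t4, hmk]

end CoreUB

section Lower
variable {r : ℕ} {n : Fin r → ℕ}

/-- the extremal graph : all edges from `k-1` fixed vertices in part `i0` to other parts -/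
def lowG (n : Fin r → ℕ) (i0 : Fin r) (k : ℕ) : SimpleGraph (Σ i : Fin r, Fin (n i)) where
  Adj u v := u.1 ≠ v.1 ∧ ((u.1 = i0 ∧ u.2.val < k - 1) ∨ (v.1 = i0 ∧ v.2.val < k - 1))
  symm := ⟨fun u v ⟨h1, h2⟩ => ⟨h1.symm, h2.symm⟩⟩
  loopless := ⟨fun u h => h.1 rfl⟩

lemma fiber_card (i : Fin r) :
    ((Finset.univ : Finset (Σ i : Fin r, Fin (n i))).filter (fun v => v.1 = i)).card = n i := by
  have h := Finset.card_bij
    (t := (Finset.univ : Finset (Σ i : Fin r, Fin (n i))).filter (fun v => v.1 = i))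
    (fun (a : Fin (n i)) (_ : a ∈ (Finset.univ : Finset (Fin (n i)))) =>
    (⟨i, a⟩ : Σ i : Fin r, Fin (n i))) ?_ ?_ ?_
  · rw [← h, Finset.card_univ, Fintype.card_fin]
  · intro a _
    exact Finset.mem_filter.2 ⟨Finset.mem_univ _, rfl⟩
  · intro a _ b _ h
    simpa using h
  · rintro ⟨j, x⟩ hv
    obtain ⟨-, hj⟩ := Finset.mem_filter.1 hv
    subst hj
    exact ⟨x, Finset.mem_univ _, rfl⟩

lemma lowG_le (i0 : Fin r) (k : ℕ) :
    lowG n i0 k ≤ completeMultipartiteGraph (fun i => Fin (n i)) := by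
  intro u v h
  exact h.1

lemma lowG_T_card (i0 : Fin r) (k : ℕ) (hk : k ≤ n i0) :
    ((Finset.univ : Finset (Σ i : Fin r, Fin (n i))).filter
      (fun u => u.1 = i0 ∧ u.2.val < k - 1)).card = k - 1 := by
  have h := Finset.card_bij
    (t := (Finset.univ : Finset (Σ i : Fin r, Fin (n i))).filter
      (fun u => u.1 = i0 ∧ u.2.val < k - 1))
    (fun (a : Fin (k - 1)) (_ : a ∈ (Finset.univ : Finset (Fin (k - 1)))) =>
    (⟨i0, ⟨a.val, by have := a.isLt; omega⟩⟩ : Σ i : Fin r, Fin (n i))) ?_ ?_ ?_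
  · rw [← h, Finset.card_univ, Fintype.card_fin]
  · intro a _
    refine Finset.mem_filter.2 ⟨Finset.mem_univ _, rfl, ?_⟩
    exact a.isLt
  · intro a _ b _ h
    have h2 := eq_of_heq (Sigma.mk.inj_iff.1 h).2
    exact Fin.ext (by simpa using congrArg Fin.val h2)
  · rintro ⟨j, x⟩ hv
    obtain ⟨-, hj, hx⟩ := Finset.mem_filter.1 hv
    subst hj
    exact ⟨⟨x.val, hx⟩, Finset.mem_univ _, by simp [Fin.ext_iff]⟩

end Lower

section Final
variable {r : ℕ} {n : Fin r → ℕ}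

lemma lowG_no_copy (i0 : Fin r) (k : ℕ) (hk : 1 ≤ k) (hkn : k ≤ n i0) :
    ¬ HasCopy (lowG n i0 k) (kCliques k 2) := by
  classical
  intro hcopy
  obtain ⟨M, hM, hcard⟩ := isMatch_of_hasCopy hcopy
  set T := (Finset.univ : Finset (Σ i : Fin r, Fin (n i))).filter
    (fun u => u.1 = i0 ∧ u.2.val < k - 1) with hT_def
  have hTcard : T.card = k - 1 := lowG_T_card i0 k hkn
  set g : (Σ i : Fin r, Fin (n i)) × (Σ i : Fin r, Fin (n i)) → (Σ i : Fin r, Fin (n i)) :=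
    fun p => if p.1.1 = i0 ∧ p.1.2.val < k - 1 then p.1 else p.2 with hg_def
  have hmapsto : ∀ p ∈ M, g p ∈ T := by
    intro p hp
    obtain ⟨h1, h2⟩ := hM.1 p hp
    by_cases hc : p.1.1 = i0 ∧ p.1.2.val < k - 1
    · rw [hg_def]; simp only [if_pos hc]
      exact Finset.mem_filter.2 ⟨Finset.mem_univ _, hc⟩
    · rw [hg_def]; simp only [if_neg hc]
      rcases h2 with h2 | h2
      · exact absurd h2 hc
      · exact Finset.mem_filter.2 ⟨Finset.mem_univ _, h2⟩
  have hinj : Set.InjOn g M := by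
    intro p hp q hq heq
    by_contra hne
    obtain ⟨d1, d2, d3, d4⟩ := hM.2 p (by simpa using hp) q (by simpa using hq) hne
    rw [hg_def] at heq
    by_cases h1 : p.1.1 = i0 ∧ p.1.2.val < k - 1 <;>
      by_cases h2 : q.1.1 = i0 ∧ q.1.2.val < k - 1
    · simp only [if_pos h1, if_pos h2] at heq; exact d1 heq
    · simp only [if_pos h1, if_neg h2] at heq; exact d2 heq
    · simp only [if_neg h1, if_pos h2] at heq; exact d3 heq
    · simp only [if_neg h1, if_neg h2] at heq; exact d4 heq
  have hle := Finset.card_le_card_of_injOn g hmapsto hinj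
  rw [hcard, hTcard] at hle
  omega

lemma lowG_count (i0 : Fin r) (k : ℕ) (hk : 1 ≤ k) (hkn : k ≤ n i0) :
    (lowG n i0 k).edgeSet.ncard = (k - 1) * ((∑ i, n i) - n i0) := by
  classical
  set T := (Finset.univ : Finset (Σ i : Fin r, Fin (n i))).filter
    (fun u => u.1 = i0 ∧ u.2.val < k - 1) with hT_def
  set B := (Finset.univ : Finset (Σ i : Fin r, Fin (n i))).filter
    (fun u => ¬ u.1 = i0) with hB_def
  have hTcard : T.card = k - 1 := lowG_T_card i0 k hkn
  have hBcard : B.card = (∑ i, n i) - n i0 := by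
    rw [hB_def, Finset.filter_not, Finset.card_sdiff_of_subset (Finset.filter_subset _ _),
      fiber_card i0, Finset.card_univ, Fintype.card_sigma]
    simp
  letI : DecidableRel (lowG n i0 k).Adj := Classical.decRel _
  have hcnt : (T ×ˢ B).card = (lowG n i0 k).edgeFinset.card := by
    refine Finset.card_bij (fun p _ => s(p.1, p.2)) ?_ ?_ ?_
    · intro p hp
      obtain ⟨hp1, hp2⟩ := Finset.mem_product.1 hp
      obtain ⟨-, hT1, hT2⟩ := Finset.mem_filter.1 hp1
      obtain ⟨-, hBne⟩ := Finset.mem_filter.1 hp2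
      rw [SimpleGraph.mem_edgeFinset, SimpleGraph.mem_edgeSet]
      exact ⟨fun h => hBne (h ▸ hT1), Or.inl ⟨hT1, hT2⟩⟩
    · intro p hp q hq heq
      obtain ⟨hp1, hp2⟩ := Finset.mem_product.1 hp
      obtain ⟨hq1, hq2⟩ := Finset.mem_product.1 hq
      rcases Sym2.eq_iff.1 heq with ⟨h1, h2⟩ | ⟨h1, h2⟩
      · exact Prod.ext h1 h2
      · exfalso
        obtain ⟨-, hT1, -⟩ := Finset.mem_filter.1 hp1
        obtain ⟨-, hBne⟩ := Finset.mem_filter.1 hq2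
        exact hBne (by rw [← h1, hT1])
    · intro e he
      rw [SimpleGraph.mem_edgeFinset] at he
      induction e with
      | _ u v =>
        rw [SimpleGraph.mem_edgeSet] at he
        obtain ⟨hne, hor⟩ := he
        rcases hor with h | h
        · refine ⟨(u, v), Finset.mem_product.2 ⟨Finset.mem_filter.2 ⟨Finset.mem_univ _, h⟩,
            Finset.mem_filter.2 ⟨Finset.mem_univ _, fun hc => hne (h.1.trans hc.symm)⟩⟩, rfl⟩
        · refine ⟨(v, u), Finset.mem_product.2 ⟨Finset.mem_filter.2 ⟨Finset.mem_univ _, h⟩,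
            Finset.mem_filter.2 ⟨Finset.mem_univ _, fun hc => hne (hc.trans h.1.symm)⟩⟩,
            Sym2.eq_swap⟩
  have h0 : (lowG n i0 k).edgeSet.ncard = (lowG n i0 k).edgeFinset.card :=
    Set.ncard_eq_toFinset_card' _
  rw [h0, ← hcnt, Finset.card_product, hTcard, hBcard]

end Final

/-- De Silva–Heysse–Young: for `r ≥ 2` and `1 ≤ k ≤ n_1 ≤ ⋯ ≤ n_r`,
`ex(K_{n_1,…,n_r}, kK_2) = (k−1)(n_2 + ⋯ + n_r)`. -/
theorem stmt_13 (r k : ℕ) (hr : 2 ≤ r) (n : Fin r → ℕ) (hpos : ∀ i, 0 < n i)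
    (hmono : Monotone n) (hk : 1 ≤ k) (hkn : k ≤ n ⟨0, by omega⟩) :
    exNum (completeMultipartite n) (kCliques k 2) =
      (k - 1) * ((∑ i, n i) - n ⟨0, by omega⟩) := by
  classical
  set i0 : Fin r := ⟨0, by omega⟩ with hi0_def
  set bound := (k - 1) * ((∑ i, n i) - n i0) with hbound_def
  have hmem : bound ∈ {m | ∃ H ≤ completeMultipartite n, ¬ HasCopy H (kCliques k 2) ∧
      m = H.edgeSet.ncard} :=
    ⟨lowG n i0 k, lowG_le i0 k, lowG_no_copy i0 k hk hkn, (lowG_count i0 k hk hkn).symm⟩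
  have hub : ∀ x ∈ {m | ∃ H ≤ completeMultipartite n, ¬ HasCopy H (kCliques k 2) ∧
      m = H.edgeSet.ncard}, x ≤ bound := by
    rintro x ⟨H, hle, hnc, rfl⟩
    have hpart : ∀ a b : (Σ i : Fin r, Fin (n i)), H.Adj a b → Sigma.fst a ≠ Sigma.fst b :=
      fun a b h => hle h
    have hno : ∀ M, IsMatch H M → M.card < k := by
      intro M hM
      by_contra hc
      push_neg at hc
      obtain ⟨M', hsub, hcard'⟩ := Finset.exists_subset_card_eq hc
      exact hnc (hasCopy_of_isMatch (isMatch_subset hM hsub) hcard')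
    have h := core_UB hr Sigma.fst k hk (n i0) hkn H hpart Finset.univ
      (fun i => by
        rw [fiber_card i]
        exact hmono (show i0 ≤ i by simp [hi0_def, Fin.le_def]))
      (fun a b _ => Finset.mem_univ a) hno
    have hNcard : (Finset.univ : Finset (Σ i : Fin r, Fin (n i))).card = ∑ i, n i := by
      rw [Finset.card_univ, Fintype.card_sigma]
      simp
    rw [hNcard] at h
    exact h
  rw [exNum]
  exact le_antisymm (csSup_le ⟨bound, hmem⟩ hub) (le_csSup ⟨bound, hub⟩ hmem)
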